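/- If (μ_t)_{t≥0} is a family of integrable probability measures with negative means which is non-increasing in the usual stochastic order (i.e., μ_t([x,∞)) ≤ μ_s([x,∞)) for all s ≤ t and all x), then (μ_t) is non-decreasing in the WDS order. -/

import Mathlib

open MeasureTheory Set Filter

noncomputable def meanM (μ : Measure ℝ) : ℝ := ∫ y, y ∂μ

noncomputable def rSupE (μ : Measure ℝ) : EReal :=
  sInf ((fun z : ℝ => (z : EReal)) '' {z : ℝ | μ (Ici z) = 0})

noncomputable def psiWds (μ : Measure ℝ) (x : ℝ) : EReal :=
  if (x : EReal) < rSupE μ then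
    ((((∫ y in Ici x, y ∂μ) - meanM μ) / (μ (Ici x)).toReal : ℝ) : EReal)
  else ⊤

noncomputable def Kfun (μ : Measure ℝ) (x : ℝ) : ℝ :=
  (∫ y in Ici x, (y - x) ∂μ) - meanM μ

/-!
On `{x < r_μ}` one has `Ψ_μ(x) = x + K_μ(x) / μ[x, ∞)` with
`K_μ(x) = ∫_{[x,∞)} (y - x) dμ - m = ∫ (x - y)⁺ dμ - x ≥ -m > 0`.
By the layer-cake formula `∫ (x - y)⁺ dμ = ∫_0^∞ μ(-∞, x - u) du`, so `K` increases and the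
tail `μ[x, ∞)` decreases when `μ` decreases in the stochastic order; hence the quotient increases.
A smaller measure also has a smaller essential supremum, so the region where `Ψ = ⊤` only grows.
-/

section Kfun

variable {μ ν : Measure ℝ} (x : ℝ)

lemma setIntegral_Ici_sub_eq_integral_max :
    ∫ y in Ici x, (y - x) ∂μ = ∫ y, max (y - x) 0 ∂μ := by
  rw [← integral_indicator measurableSet_Ici]
  refine integral_congr_ae (Eventually.of_forall fun y => ?_)
  rcases lt_or_ge y x with h | h
  · simp [indicator_of_notMem (notMem_Ici.mpr h), max_eq_right (sub_nonpos.mpr h.le)]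
  · simp [indicator_of_mem (mem_Ici.mpr h), max_eq_left (sub_nonneg.mpr h)]

lemma Kfun_eq_integral_max_sub [IsProbabilityMeasure μ] (hμ : Integrable (fun y : ℝ => y) μ) :
    Kfun μ x = ∫ y, max (x - y) 0 ∂μ - x := by
  have hsub : Integrable (fun y : ℝ => y - x) μ := hμ.sub (integrable_const x)
  have hpos : Integrable (fun y : ℝ => max (x - y) 0) μ :=
    ((integrable_const x).sub hμ).pos_part
  have hsplit : ∫ y, max (y - x) 0 ∂μ = ∫ y, max (x - y) 0 ∂μ + ∫ y, (y - x) ∂μ := by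
    rw [← integral_add hpos hsub]
    refine integral_congr_ae (Eventually.of_forall fun y => ?_)
    rcases le_total x y with h | h <;> simp [h]
  rw [Kfun, setIntegral_Ici_sub_eq_integral_max, hsplit, integral_sub hμ (integrable_const x),
    meanM, integral_const, probReal_univ, one_smul]
  ring

lemma Kfun_nonneg (hm : meanM μ ≤ 0) : 0 ≤ Kfun μ x := by
  have : 0 ≤ ∫ y in Ici x, (y - x) ∂μ :=
    setIntegral_nonneg measurableSet_Ici fun y hy => sub_nonneg.mpr hy
  unfold Kfun
  linarith

lemma sub_meanM_eq_Kfun_add [IsFiniteMeasure μ] (hμ : Integrable (fun y : ℝ => y) μ) :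
    ∫ y in Ici x, y ∂μ - meanM μ = Kfun μ x + x * μ.real (Ici x) := by
  rw [Kfun, integral_sub hμ.integrableOn (integrableOn_const (measure_ne_top _ _)),
    setIntegral_const, smul_eq_mul]
  ring

lemma integral_max_sub_le_of_measure_Ici_le [IsProbabilityMeasure μ] [IsProbabilityMeasure ν]
    (hν : Integrable (fun y : ℝ => y) ν) (hle : ∀ z, ν (Ici z) ≤ μ (Ici z)) :
    ∫ y, max (x - y) 0 ∂μ ≤ ∫ y, max (x - y) 0 ∂ν := by
  have hnn : 0 ≤ fun y : ℝ => max (x - y) 0 := fun y => le_max_right _ _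
  have hmeas : Measurable fun y : ℝ => max (x - y) 0 :=
    (measurable_const.sub measurable_id).max measurable_const
  have hlevel : ∀ u : ℝ, 0 < u → {y : ℝ | u < max (x - y) 0} = (Ici (x - u))ᶜ := by
    intro u hu
    ext y
    simp only [mem_ofPred_eq, lt_max_iff, mem_compl_iff, mem_Ici, not_le]
    constructor
    · rintro (h | h) <;> linarith
    · intro h; left; linarith
  have hlayer : ∫⁻ y, ENNReal.ofReal (max (x - y) 0) ∂μ
      ≤ ∫⁻ y, ENNReal.ofReal (max (x - y) 0) ∂ν := by
    rw [lintegral_eq_lintegral_meas_lt μ (ae_of_all _ hnn) hmeas.aemeasurable,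
      lintegral_eq_lintegral_meas_lt ν (ae_of_all _ hnn) hmeas.aemeasurable]
    refine setLIntegral_mono' measurableSet_Ioi fun u hu => ?_
    rw [hlevel u hu, prob_compl_eq_one_sub measurableSet_Ici,
      prob_compl_eq_one_sub measurableSet_Ici]
    exact tsub_le_tsub_left (hle _) 1
  have hfin : ∫⁻ y, ENNReal.ofReal (max (x - y) 0) ∂ν ≠ ⊤ :=
    (hasFiniteIntegral_iff_ofReal (ae_of_all _ hnn)).mp
      ((integrable_const x).sub hν).pos_part.hasFiniteIntegral |>.ne
  rw [integral_eq_lintegral_of_nonneg_ae (ae_of_all _ hnn) hmeas.aestronglyMeasurable,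
    integral_eq_lintegral_of_nonneg_ae (ae_of_all _ hnn) hmeas.aestronglyMeasurable]
  exact ENNReal.toReal_mono hfin hlayer

lemma Kfun_le_of_measure_Ici_le [IsProbabilityMeasure μ] [IsProbabilityMeasure ν]
    (hμ : Integrable (fun y : ℝ => y) μ) (hν : Integrable (fun y : ℝ => y) ν)
    (hle : ∀ z, ν (Ici z) ≤ μ (Ici z)) : Kfun μ x ≤ Kfun ν x := by
  rw [Kfun_eq_integral_max_sub x hμ, Kfun_eq_integral_max_sub x hν]
  linarith [integral_max_sub_le_of_measure_Ici_le x hν hle]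

end Kfun

section rSupE

variable {μ ν : Measure ℝ}

lemma rSupE_mono (hle : ∀ z, ν (Ici z) ≤ μ (Ici z)) : rSupE ν ≤ rSupE μ :=
  sInf_le_sInf <| image_mono fun z (hz : μ (Ici z) = 0) =>
    show ν (Ici z) = 0 from le_antisymm (hz ▸ hle z) zero_le

lemma measure_Ici_ne_zero_of_lt_rSupE {x : ℝ} (hx : (x : EReal) < rSupE μ) : μ (Ici x) ≠ 0 :=
  fun h0 => (sInf_le (mem_image_of_mem (fun z : ℝ => (z : EReal))
    (show x ∈ {z | μ (Ici z) = 0} from h0))).not_gt hx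

end rSupE

lemma psiWds_eq_add_Kfun_div {μ : Measure ℝ} [IsFiniteMeasure μ]
    (hμ : Integrable (fun y : ℝ => y) μ) {x : ℝ} (hx : (x : EReal) < rSupE μ) :
    psiWds μ x = ((x + Kfun μ x / μ.real (Ici x) : ℝ) : EReal) := by
  have hpos : 0 < μ.real (Ici x) :=
    ENNReal.toReal_pos (measure_Ici_ne_zero_of_lt_rSupE hx) (measure_ne_top _ _)
  rw [psiWds, if_pos hx, ← measureReal_def, sub_meanM_eq_Kfun_add x hμ]
  congr 1
  field_simp
  ring

lemma psiWds_le_of_measure_Ici_le {μ ν : Measure ℝ} [IsProbabilityMeasure μ]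
    [IsProbabilityMeasure ν] (hμ : Integrable (fun y : ℝ => y) μ)
    (hν : Integrable (fun y : ℝ => y) ν) (hmν : meanM ν ≤ 0)
    (hle : ∀ z, ν (Ici z) ≤ μ (Ici z)) (x : ℝ) : psiWds μ x ≤ psiWds ν x := by
  by_cases hxν : (x : EReal) < rSupE ν
  · have hxμ : (x : EReal) < rSupE μ := hxν.trans_le (rSupE_mono hle)
    have hFν : 0 < ν.real (Ici x) :=
      ENNReal.toReal_pos (measure_Ici_ne_zero_of_lt_rSupE hxν) (measure_ne_top _ _)
    have hF : ν.real (Ici x) ≤ μ.real (Ici x) :=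
      ENNReal.toReal_mono (measure_ne_top _ _) (hle x)
    rw [psiWds_eq_add_Kfun_div hμ hxμ, psiWds_eq_add_Kfun_div hν hxν, EReal.coe_le_coe_iff]
    have hK := Kfun_le_of_measure_Ici_le x hμ hν hle
    exact add_le_add_right (div_le_div₀ (Kfun_nonneg x hmν) hK hFν hF) x
  · simp only [psiWds, if_neg hxν, le_top]

theorem stmt9 (μ : ℝ → Measure ℝ)
    (hprob : ∀ t, 0 ≤ t → IsProbabilityMeasure (μ t))
    (hint : ∀ t, 0 ≤ t → Integrable (fun y : ℝ => y) (μ t))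
    (hneg : ∀ t, 0 ≤ t → meanM (μ t) < 0)
    (hsto : ∀ s t, 0 ≤ s → s ≤ t → ∀ x : ℝ, μ t (Ici x) ≤ μ s (Ici x)) :
    ∀ s t, 0 ≤ s → s ≤ t → ∀ x : ℝ, psiWds (μ s) x ≤ psiWds (μ t) x := by
  intro s t hs hst x
  have ht : 0 ≤ t := hs.trans hst
  have := hprob s hs
  have := hprob t ht
  exact psiWds_le_of_measure_Ici_le (hint s hs) (hint t ht) (hneg t ht).le (hsto s t hs hst) x
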